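/- Let A, B be positive definite operators, k, t ∈ (0, 1/2], and L = 1+2t-4kt, and suppose A^{(1-2kt)p/(4kt)} B^p A^{(1-2kt)p/(4kt)} ≤ I for some p > 0. Then F_{k,t}(A^p, B^p) ≤ I. -/

import Mathlib

open scoped NNReal
set_option synthInstance.maxHeartbeats 1000000
set_option maxHeartbeats 1000000

noncomputable section

variable {H : Type*} [NormedAddCommGroup H] [InnerProductSpace ℂ H] [CompleteSpace H]

/-- The weighted geometric mean `X #_k Y = X^{1/2} (X^{-1/2} Y X^{-1/2})^k X^{1/2}`
of bounded operators on a Hilbert space (powers via the continuous functional calculus). -/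
def owgm (k : ℝ) (X Y : H →L[ℂ] H) : H →L[ℂ] H :=
  X ^ ((1:ℝ)/2) * (X ^ (-(1:ℝ)/2) * Y * X ^ (-(1:ℝ)/2)) ^ k * X ^ ((1:ℝ)/2)

/-- The (k,t)-spectral geometric mean
`F_{k,t}(A,B) = (A⁻¹ #_k B)^t A^{1+2t-4kt} (A⁻¹ #_k B)^t`. -/
def oF (k t : ℝ) (A B : H →L[ℂ] H) : H →L[ℂ] H :=
  (owgm k (Ring.inverse A) B) ^ t * A ^ (1 + 2*t - 4*k*t) * (owgm k (Ring.inverse A) B) ^ t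

/-- The weighted spectral geometric mean `A ♮_t B = (A⁻¹ # B)^t A (A⁻¹ # B)^t`. -/
def snat (t : ℝ) (A B : H →L[ℂ] H) : H →L[ℂ] H :=
  (owgm (1/2) (Ring.inverse A) B) ^ t * A * (owgm (1/2) (Ring.inverse A) B) ^ t

end

noncomputable section
namespace MyLH
variable {A : Type*} [CStarAlgebra A] [PartialOrder A] [StarOrderedRing A]
open CFC

lemma zero_nm {a : A} (hu : IsUnit a) : (0:ℝ≥0) ∉ spectrum ℝ≥0 a :=
  (spectrum.zero_notMem_iff ℝ≥0).mpr hu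

lemma sp {a : A} (h : (0:ℝ≥0) ∉ spectrum ℝ≥0 a) (ha : 0 ≤ a) : IsStrictlyPositive a :=
  ((spectrum.zero_notMem_iff ℝ≥0).mp h).isStrictlyPositive ha

def rpowUnit (a : A) (h : (0:ℝ≥0) ∉ spectrum ℝ≥0 a) (x : ℝ) (ha : 0 ≤ a) : Aˣ :=
  ⟨a ^ x, a ^ (-x), CFC.rpow_mul_rpow_neg x (sp h ha), CFC.rpow_neg_mul_rpow x (sp h ha)⟩

lemma rpow_isUnit {a : A} (h : (0:ℝ≥0) ∉ spectrum ℝ≥0 a) (x : ℝ) (ha : 0 ≤ a) :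
    IsUnit (a ^ x) := ⟨rpowUnit a h x ha, rfl⟩

lemma rpow_sa {a : A} {x : ℝ} : IsSelfAdjoint (a ^ x) :=
  IsSelfAdjoint.of_nonneg CFC.rpow_nonneg

lemma le_rpow_iff_norm {a b : A} (hau : IsUnit a) (hbu : IsUnit b) (ha : 0 ≤ a) (hb : 0 ≤ b)
    (s : ℝ) : a ^ s ≤ b ^ s ↔ ‖a ^ (s/2) * b ^ (-(s/2) : ℝ)‖ ≤ 1 := by
  rcases eq_or_ne s 0 with rfl | hs
  · rw [CFC.rpow_zero a ha, CFC.rpow_zero b hb]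
    simp only [zero_div, neg_zero, CFC.rpow_zero a ha, CFC.rpow_zero b hb, mul_one, le_refl,
      true_iff]
    rcases subsingleton_or_nontrivial A with hS | hN
    · rw [Subsingleton.elim (1:A) 0, norm_zero]; exact zero_le_one
    · rw [CStarRing.norm_one]
  · have h1 : a ^ (s/2) = (a ^ s) ^ ((1:ℝ)/2) := by
      rw [CFC.rpow_rpow a s ((1:ℝ)/2) hs (sp (zero_nm hau) ha)]; ring_nf
    have h2 : b ^ (-(s/2) : ℝ) = (b ^ s) ^ (-(1/2) : ℝ) := by
      rw [CFC.rpow_rpow b s (-(1/2) : ℝ) hs (sp (zero_nm hbu) hb)]; ring_nf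
    rw [h1, h2, ← CFC.sqrt_eq_rpow]
    exact le_iff_norm_sqrt_mul_rpow (a ^ s) (b ^ s) CFC.rpow_nonneg
      ((rpow_isUnit (zero_nm hbu) s hb).isStrictlyPositive CFC.rpow_nonneg)

lemma norm_half_le_one' {a b : A} (hau : IsUnit a) (hbu : IsUnit b) (ha : 0 ≤ a) (hb : 0 ≤ b)
    {s : ℝ} (hab : a ^ s ≤ b ^ s) :
    ‖a ^ (s/2) * b ^ (-(s/2) : ℝ)‖ ≤ 1 :=
  (le_rpow_iff_norm hau hbu ha hb s).mp hab

lemma norm_half_le_one'' {a b : A} (hau : IsUnit a) (hbu : IsUnit b) (ha : 0 ≤ a) (hb : 0 ≤ b)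
    {s : ℝ} (hab : a ^ s ≤ b ^ s) :
    ‖b ^ (-(s/2) : ℝ) * a ^ (s/2)‖ ≤ 1 := by
  have := norm_half_le_one' hau hbu ha hb hab
  rwa [← norm_star, star_mul, rpow_sa.star_eq, rpow_sa.star_eq] at this

lemma midpoint_step {a b : A} (ha : 0 ≤ a) (hb : 0 ≤ b) (hau : IsUnit a) (hbu : IsUnit b)
    {s t : ℝ} (hs : a ^ s ≤ b ^ s) (ht : a ^ t ≤ b ^ t) :
    a ^ ((s + t)/2) ≤ b ^ ((s + t)/2) := by
  rcases subsingleton_or_nontrivial A with hS | hN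
  · exact le_of_eq (Subsingleton.elim _ _)
  have hna := zero_nm hau
  have hnb := zero_nm hbu
  set u : ℝ := (s + t)/2 with hu
  rw [le_rpow_iff_norm hau hbu ha hb u]
  set D : A := a ^ (u/2) * b ^ (-(u/2) : ℝ) with hD
  rw [← sq_le_one_iff₀ (norm_nonneg _), sq, ← CStarRing.norm_self_mul_star]
  have hstarD : star D = b ^ (-(u/2) : ℝ) * a ^ (u/2) := by
    rw [hD, star_mul, rpow_sa.star_eq, rpow_sa.star_eq]
  set E : A := a ^ (u/2) * b ^ (-u : ℝ) * a ^ (u/2) with hE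
  have hDE : D * star D = E := by
    have harith : (-(u/2) + -(u/2) : ℝ) = -u := by ring
    rw [hstarD, hD, hE, mul_assoc, mul_assoc, ← mul_assoc (b ^ (-(u/2):ℝ)),
      ← CFC.rpow_add hbu, harith]
  rw [hDE]
  -- E is self adjoint (indeed nonneg)
  have hEnn : 0 ≤ E := by
    have h' := star_right_conjugate_nonneg (CFC.rpow_nonneg : (0:A) ≤ b ^ (-u:ℝ)) (a ^ (u/2))
    rwa [(rpow_sa : IsSelfAdjoint (a ^ (u/2))).star_eq] at h'
  -- spectrum of E equals spectrum of X
  set X : A := (b ^ (-(s/2) : ℝ) * a ^ (s/2)) * (a ^ (t/2) * b ^ (-(t/2) : ℝ)) with hX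
  have step1 : E = ↑(rpowUnit a hna (u/2) ha) * (b ^ (-u : ℝ) * a ^ u) *
      ↑(rpowUnit a hna (u/2) ha)⁻¹ := by
    show E = a ^ (u/2) * (b ^ (-u:ℝ) * a ^ u) * a ^ (-(u/2):ℝ)
    have h2 : (u + -(u/2) : ℝ) = u/2 := by ring
    rw [hE, mul_assoc, mul_assoc, mul_assoc, ← CFC.rpow_add hau, h2]
  have step2 : b ^ (-u : ℝ) * a ^ u = ↑(rpowUnit b hnb (t/2) hb)⁻¹ * X *
      ↑(rpowUnit b hnb (t/2) hb) := by
    show b ^ (-u : ℝ) * a ^ u = b ^ (-(t/2):ℝ) * X * b ^ (t/2)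
    have e1 : (-(t/2) + -(s/2) : ℝ) = -u := by rw [hu]; ring
    have e2 : (s/2 + t/2 : ℝ) = u := by rw [hu]; ring
    rw [hX]
    simp only [mul_assoc]
    rw [CFC.rpow_neg_mul_rpow (t/2) (sp hnb hb), mul_one, ← CFC.rpow_add hau, ← mul_assoc,
      ← CFC.rpow_add hbu, e1, e2]
  have hspec : spectrum ℂ E = spectrum ℂ X := by
    rw [step1, spectrum.units_conjugate, step2, spectrum.units_conjugate']
  -- norm chain
  have hrad : (‖E‖₊ : ENNReal) ≤ (‖X‖₊ : ENNReal) := by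
    rw [← (IsSelfAdjoint.of_nonneg hEnn).spectralRadius_eq_nnnorm]
    unfold spectralRadius
    rw [hspec]
    exact spectrum.spectralRadius_le_nnnorm X
  have hXnorm : ‖X‖ ≤ 1 := by
    have h1 := norm_half_le_one'' hau hbu ha hb hs
    have h2 := norm_half_le_one' hau hbu ha hb ht
    calc ‖X‖ ≤ ‖b ^ (-(s/2) : ℝ) * a ^ (s/2)‖ * ‖a ^ (t/2) * b ^ (-(t/2) : ℝ)‖ :=
          norm_mul_le _ _
      _ ≤ 1 := by nlinarith [norm_nonneg (b ^ (-(s/2) : ℝ) * a ^ (s/2)),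
          norm_nonneg (a ^ (t/2) * b ^ (-(t/2) : ℝ))]
  have : ‖E‖₊ ≤ ‖X‖₊ := by exact_mod_cast hrad
  calc ‖E‖ ≤ ‖X‖ := this
    _ ≤ 1 := hXnorm

lemma continuous_rpow {a : A} (ha : 0 ≤ a) (hna : (0:ℝ≥0) ∉ spectrum ℝ≥0 a) :
    Continuous fun r : ℝ => a ^ r := by
  have hΦ : Continuous fun p : ℝ × spectrum ℝ≥0 a => (p.2 : ℝ≥0) ^ p.1 := by
    rw [continuous_iff_continuousAt]
    rintro ⟨r, x⟩
    have hx : (x : ℝ≥0) ≠ 0 := fun h => hna (h ▸ x.2)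
    have hcont : ContinuousAt (fun p : ℝ × spectrum ℝ≥0 a => ((p.2 : ℝ≥0), p.1)) (r, x) :=
      ((continuous_subtype_val.comp continuous_snd).prodMk continuous_fst).continuousAt
    have hg : ContinuousAt (fun q : ℝ≥0 × ℝ => q.1 ^ q.2) ((x : ℝ≥0), r) :=
      NNReal.continuousAt_rpow (Or.inl hx)
    show ContinuousAt ((fun q : ℝ≥0 × ℝ => q.1 ^ q.2) ∘
      (fun p : ℝ × spectrum ℝ≥0 a => ((p.2 : ℝ≥0), p.1))) (r, x)
    exact ContinuousAt.comp hg hcont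
  set F : C(ℝ, C(spectrum ℝ≥0 a, ℝ≥0)) := ContinuousMap.curry ⟨_, hΦ⟩ with hF
  have key : ∀ r : ℝ, a ^ r = cfcL (R := ℝ≥0) (a := a) ha (F r) := by
    intro r
    have hf : ContinuousOn (fun x : ℝ≥0 => x ^ r) (spectrum ℝ≥0 a) := by
      rw [continuousOn_iff_continuous_restrict]
      exact hΦ.comp (continuous_const.prodMk continuous_id)
    rw [CFC.rpow_def, cfc_eq_cfcL ha hf]
    congr 1
  have : Continuous fun r : ℝ => cfcL (R := ℝ≥0) (a := a) ha (F r) :=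
    (cfcL (R := ℝ≥0) (a := a) ha).continuous.comp F.continuous
  simpa only [← key] using this

lemma icc_subset_of_midpoint {S : Set ℝ} (hS : IsClosed S) (h0 : (0:ℝ) ∈ S) (h1 : (1:ℝ) ∈ S)
    (hmid : ∀ x ∈ S, ∀ y ∈ S, (x + y)/2 ∈ S) : Set.Icc (0:ℝ) 1 ⊆ S := by
  have key : ∀ n : ℕ, ∀ m : ℕ, m ≤ 2^n → ((m:ℝ)/2^n) ∈ S := by
    intro n
    induction n with
    | zero => intro m hm; interval_cases m <;> simpa
    | succ n ih =>
      intro m hm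
      rcases Nat.even_or_odd m with ⟨j, hj⟩ | ⟨j, hj⟩
      · have hj2 : j ≤ 2^n := by subst hj; rw [pow_succ] at hm; omega
        have hmem := ih j hj2
        have : ((m:ℝ)/2^(n+1)) = (j:ℝ)/2^n := by
          subst hj; push_cast; rw [pow_succ]; field_simp; ring
        rwa [this]
      · have hj2 : j + 1 ≤ 2^n := by subst hj; rw [pow_succ] at hm; omega
        have hmem := hmid _ (ih j (by omega)) _ (ih (j+1) hj2)
        have : ((m:ℝ)/2^(n+1)) = ((j:ℝ)/2^n + ((j:ℕ)+1:ℝ)/2^n)/2 := by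
          subst hj; push_cast; rw [pow_succ]; field_simp; ring
        rw [this]; exact_mod_cast hmem
  intro x hx
  rw [← hS.closure_eq]
  rw [Metric.mem_closure_iff]
  intro ε hε
  obtain ⟨n, hn⟩ := exists_pow_lt_of_lt_one hε (by norm_num : (1:ℝ)/2 < 1)
  set m : ℕ := ⌊x * 2^n⌋₊ with hm
  have h2n : (0:ℝ) < 2^n := by positivity
  have hm_le : m ≤ 2^n := by
    calc m ≤ ⌊((2^n : ℕ) : ℝ)⌋₊ := Nat.floor_le_floor (by push_cast; nlinarith [hx.2])
      _ = 2^n := Nat.floor_natCast _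
  refine ⟨(m:ℝ)/2^n, key n m hm_le, ?_⟩
  have hy0 : 0 ≤ x * 2^n := by nlinarith [hx.1]
  have hfl : (m:ℝ) ≤ x * 2^n := Nat.floor_le hy0
  have hfl2 : x * 2^n < (m:ℝ) + 1 := Nat.lt_floor_add_one _
  have h0' : 0 ≤ x - (m:ℝ)/2^n := by
    rw [sub_nonneg, div_le_iff₀ h2n]; exact hfl
  have h1' : x - (m:ℝ)/2^n < ε := by
    have step : x - (m:ℝ)/2^n < 1/2^n := by
      rw [sub_lt_iff_lt_add, ← add_div, lt_div_iff₀ h2n]; linarith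
    have : (1:ℝ)/2^n = (1/2:ℝ)^n := by rw [div_pow, one_pow]
    linarith [this ▸ step]
  rw [Real.dist_eq, abs_of_nonneg h0']
  exact h1'

theorem rpow_le_rpow_of_le {a b : A} (ha : 0 ≤ a) (hb : 0 ≤ b) (hau : IsUnit a) (hbu : IsUnit b)
    (hab : a ≤ b) {r : ℝ} (hr : r ∈ Set.Icc (0:ℝ) 1) : a ^ r ≤ b ^ r := by
  have hna := zero_nm hau
  have hnb := zero_nm hbu
  set S : Set ℝ := Set.Icc 0 1 ∩ {r : ℝ | a ^ r ≤ b ^ r} with hS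
  have hclosed : IsClosed S := by
    apply isClosed_Icc.inter
    have heq : {r : ℝ | a ^ r ≤ b ^ r} = (fun r : ℝ => b ^ r - a ^ r) ⁻¹' {x : A | 0 ≤ x} := by
      ext r
      simp only [Set.mem_setOf_eq, Set.mem_preimage, sub_nonneg]
    rw [heq]
    exact (CStarAlgebra.isClosed_nonneg).preimage
      ((continuous_rpow hb hnb).sub (continuous_rpow ha hna))
  have h0 : (0:ℝ) ∈ S :=
    ⟨Set.left_mem_Icc.mpr zero_le_one, by simp [CFC.rpow_zero a ha, CFC.rpow_zero b hb]⟩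
  have h1 : (1:ℝ) ∈ S :=
    ⟨Set.right_mem_Icc.mpr zero_le_one, by simp [CFC.rpow_one a ha, CFC.rpow_one b hb, hab]⟩
  have hmid : ∀ x ∈ S, ∀ y ∈ S, (x + y)/2 ∈ S := by
    rintro x ⟨hx1, hx2⟩ y ⟨hy1, hy2⟩
    refine ⟨⟨by linarith [hx1.1, hy1.1], by linarith [hx1.2, hy1.2]⟩, ?_⟩
    exact midpoint_step ha hb hau hbu hx2 hy2
  exact (icc_subset_of_midpoint hclosed h0 h1 hmid hr).2

lemma rpow_rpow' {a : A} (hna : (0:ℝ≥0) ∉ spectrum ℝ≥0 a) (ha : 0 ≤ a) (x y : ℝ) :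
    (a ^ x) ^ y = a ^ (x * y) := by
  rcases eq_or_ne x 0 with rfl | hx
  · rw [CFC.rpow_zero a ha, CFC.one_rpow, zero_mul, CFC.rpow_zero a ha]
  · exact CFC.rpow_rpow a x y hx (sp hna ha)

theorem key {a b : A} (ha : 0 ≤ a) (hb : 0 ≤ b) (hau : IsUnit a) (hbu : IsUnit b)
    {k t : ℝ} (hk : k ∈ Set.Ioc (0:ℝ) (1/2)) (ht : t ∈ Set.Ioc (0:ℝ) (1/2))
    {p : ℝ} (hp : 0 < p)
    (h : a ^ ((1 - 2*k*t)*p/(4*k*t)) * b ^ p * a ^ ((1 - 2*k*t)*p/(4*k*t)) ≤ 1) :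
    (a ^ (-(p/2) : ℝ) * (a ^ (p/2) * b ^ p * a ^ (p/2)) ^ k * a ^ (-(p/2) : ℝ)) ^ t
      * a ^ (p*(1+2*t-4*k*t)) *
    (a ^ (-(p/2) : ℝ) * (a ^ (p/2) * b ^ p * a ^ (p/2)) ^ k * a ^ (-(p/2) : ℝ)) ^ t ≤ 1 := by
  have hna := zero_nm hau
  have hnb := zero_nm hbu
  obtain ⟨hk0, hk2⟩ := hk
  obtain ⟨ht0, ht2⟩ := ht
  set α : ℝ := (1 - 2*k*t)*p/(4*k*t) with hαdef
  set L : ℝ := 1 + 2*t - 4*k*t with hLdef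
  have hkt : 0 < k*t := mul_pos hk0 ht0
  have h2kt : 2*k*t < 1 := by nlinarith
  have hL1 : (1:ℝ) ≤ L := by nlinarith
  -- Step 1 : b ^ p ≤ a ^ (-(2*α))
  have hb2 : b ^ p ≤ a ^ (-(2*α) : ℝ) := by
    have hc := star_left_conjugate_le_conjugate h (a ^ (-α : ℝ))
    rw [(rpow_sa : IsSelfAdjoint (a ^ (-α:ℝ))).star_eq] at hc
    have hlhs : a ^ (-α:ℝ) * (a ^ α * b ^ p * a ^ α) * a ^ (-α:ℝ) = b ^ p := by
      simp only [mul_assoc]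
      rw [CFC.rpow_mul_rpow_neg α (sp hna ha), mul_one, ← mul_assoc, CFC.rpow_neg_mul_rpow α (sp hna ha),
        one_mul]
    have hrhs : a ^ (-α:ℝ) * 1 * a ^ (-α:ℝ) = a ^ (-(2*α) : ℝ) := by
      rw [mul_one, ← CFC.rpow_add hau]
      congr 1; ring
    rwa [hlhs, hrhs] at hc
  -- Step 2 : m ≤ a ^ (p - 2*α)
  set m : A := a ^ (p/2) * b ^ p * a ^ (p/2) with hmdef
  have hm_nonneg : 0 ≤ m := by
    have h' := star_right_conjugate_nonneg (CFC.rpow_nonneg : (0:A) ≤ b ^ p) (a ^ (p/2))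
    rwa [(rpow_sa : IsSelfAdjoint (a ^ (p/2))).star_eq] at h'
  have hm_unit : IsUnit m :=
    ((rpow_isUnit hna (p/2) ha).mul (rpow_isUnit hnb p hb)).mul (rpow_isUnit hna (p/2) ha)
  have hm : m ≤ a ^ (p - 2*α : ℝ) := by
    have hc := star_left_conjugate_le_conjugate hb2 (a ^ (p/2))
    rw [(rpow_sa : IsSelfAdjoint (a ^ (p/2))).star_eq] at hc
    have hrhs : a ^ (p/2) * a ^ (-(2*α):ℝ) * a ^ (p/2) = a ^ (p - 2*α : ℝ) := by
      rw [← CFC.rpow_add hau, ← CFC.rpow_add hau]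
      congr 1; ring
    rwa [hrhs] at hc
  -- Step 3 : m ^ k ≤ a ^ ((p - 2*α)*k)
  have hmk : m ^ k ≤ a ^ ((p - 2*α)*k : ℝ) := by
    have := rpow_le_rpow_of_le hm_nonneg CFC.rpow_nonneg hm_unit (rpow_isUnit hna _ ha) hm
      (r := k) ⟨hk0.le, by linarith⟩
    rwa [rpow_rpow' hna ha] at this
  -- Step 4 : C ≤ a ^ (-(p*L)/(2*t))
  set C : A := a ^ (-(p/2):ℝ) * m ^ k * a ^ (-(p/2):ℝ) with hCdef
  have hC_nonneg : 0 ≤ C := by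
    have h' := star_right_conjugate_nonneg (CFC.rpow_nonneg : (0:A) ≤ m ^ k) (a ^ (-(p/2):ℝ))
    rwa [(rpow_sa : IsSelfAdjoint (a ^ (-(p/2):ℝ))).star_eq] at h'
  have hC_unit : IsUnit C :=
    ((rpow_isUnit hna (-(p/2)) ha).mul (rpow_isUnit (zero_nm hm_unit) k hm_nonneg)).mul
      (rpow_isUnit hna (-(p/2)) ha)
  have hnC := zero_nm hC_unit
  have hC : C ≤ a ^ (-(p*L)/(2*t) : ℝ) := by
    have hc := star_left_conjugate_le_conjugate hmk (a ^ (-(p/2):ℝ))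
    rw [(rpow_sa : IsSelfAdjoint (a ^ (-(p/2):ℝ))).star_eq] at hc
    have hrhs : a ^ (-(p/2):ℝ) * a ^ ((p - 2*α)*k : ℝ) * a ^ (-(p/2):ℝ)
        = a ^ (-(p*L)/(2*t) : ℝ) := by
      rw [← CFC.rpow_add hau, ← CFC.rpow_add hau]
      congr 1
      rw [hαdef, hLdef]
      field_simp
      ring
    rwa [hrhs] at hc
  -- Step 5 : C ^ (2*t) ≤ a ^ (-(p*L))
  have hC2t : C ^ (2*t) ≤ a ^ (-(p*L) : ℝ) := by
    have := rpow_le_rpow_of_le hC_nonneg CFC.rpow_nonneg hC_unit (rpow_isUnit hna _ ha) hC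
      (r := 2*t) ⟨by linarith, by linarith⟩
    rwa [rpow_rpow' hna ha, show (-(p*L)/(2*t))*(2*t) = -(p*L) by field_simp] at this
  -- Step 6 : conjugate by a ^ (p*L/2)
  have hfin : a ^ (p*L/2 : ℝ) * C ^ (2*t) * a ^ (p*L/2 : ℝ) ≤ 1 := by
    have hc := star_left_conjugate_le_conjugate hC2t (a ^ (p*L/2 : ℝ))
    rw [(rpow_sa : IsSelfAdjoint (a ^ (p*L/2:ℝ))).star_eq] at hc
    have hrhs : a ^ (p*L/2:ℝ) * a ^ (-(p*L):ℝ) * a ^ (p*L/2:ℝ) = 1 := by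
      rw [← CFC.rpow_add hau, ← CFC.rpow_add hau,
        show (p*L/2 + -(p*L) + p*L/2 : ℝ) = 0 by ring, CFC.rpow_zero a ha]
    rwa [hrhs] at hc
  -- Step 7 : conclude
  set x : A := C ^ t * a ^ (p*L/2 : ℝ) with hxdef
  have hstarx : star x = a ^ (p*L/2 : ℝ) * C ^ t := by
    rw [hxdef, star_mul, (rpow_sa : IsSelfAdjoint (a ^ (p*L/2:ℝ))).star_eq,
      (rpow_sa : IsSelfAdjoint (C ^ t)).star_eq]
  have hxx : star x * x = a ^ (p*L/2 : ℝ) * C ^ (2*t) * a ^ (p*L/2 : ℝ) := by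
    rw [hstarx, hxdef]
    simp only [mul_assoc]
    rw [← mul_assoc (C ^ t), ← CFC.rpow_add hC_unit, show (t + t : ℝ) = 2*t by ring]
  have hxsx : x * star x = C ^ t * a ^ (p*(1+2*t-4*k*t)) * C ^ t := by
    rw [hstarx, hxdef]
    simp only [mul_assoc]
    rw [← mul_assoc (a ^ (p*L/2:ℝ)), ← CFC.rpow_add hau,
      show (p*L/2 + p*L/2 : ℝ) = p*(1+2*t-4*k*t) by rw [hLdef]; ring]
    simp only [mul_assoc]
  have hnorm1 : ‖star x * x‖ ≤ 1 := by
    rw [CStarAlgebra.norm_le_one_iff_of_nonneg _ (star_mul_self_nonneg x)]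
    rw [hxx]
    exact hfin
  have hnorm2 : ‖x * star x‖ ≤ 1 := by
    rw [CStarRing.norm_self_mul_star]
    rwa [CStarRing.norm_star_mul_self] at hnorm1
  have := (CStarAlgebra.norm_le_one_iff_of_nonneg _ (mul_star_self_nonneg x)).mp hnorm2
  rwa [hxsx] at this

end MyLH
end

/-- If `A^{(1-2kt)p/(4kt)} B^p A^{(1-2kt)p/(4kt)} ≤ I` for some `p > 0`, then
`F_{k,t}(A^p, B^p) ≤ I`, for `k, t ∈ (0,1/2]`. -/
theorem stmt16 {H : Type*} [NormedAddCommGroup H] [InnerProductSpace ℂ H] [CompleteSpace H]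
    (A B : H →L[ℂ] H) (hA : 0 ≤ A) (hAu : IsUnit A) (hB : 0 ≤ B) (hBu : IsUnit B)
    (k t : ℝ) (hk : k ∈ Set.Ioc (0:ℝ) (1/2)) (ht : t ∈ Set.Ioc (0:ℝ) (1/2))
    (p : ℝ) (hp : 0 < p)
    (h : A ^ ((1 - 2*k*t)*p/(4*k*t)) * B ^ p * A ^ ((1 - 2*k*t)*p/(4*k*t)) ≤ 1) :
    oF k t (A ^ p) (B ^ p) ≤ 1 := by
  have hna := MyLH.zero_nm (A := H →L[ℂ] H) hAu
  have hinv : Ring.inverse (A ^ p) = A ^ (-p : ℝ) := by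
    have h1 : ((MyLH.rpowUnit A hna p hA : (H →L[ℂ] H)ˣ) : H →L[ℂ] H) = A ^ p := rfl
    rw [← h1, Ring.inverse_unit]
    rfl
  unfold oF owgm
  rw [hinv]
  have e1 : (A ^ (-p:ℝ)) ^ ((1:ℝ)/2) = A ^ (-(p/2) : ℝ) := by
    rw [MyLH.rpow_rpow' hna hA]; congr 1; ring
  have e2 : (A ^ (-p:ℝ)) ^ (-(1:ℝ)/2) = A ^ (p/2 : ℝ) := by
    rw [MyLH.rpow_rpow' hna hA]; congr 1; ring
  have e3 : (A ^ p) ^ (1+2*t-4*k*t) = A ^ (p*(1+2*t-4*k*t)) := MyLH.rpow_rpow' hna hA p _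
  rw [e1, e2, e3]
  exact MyLH.key hA hB hAu hBu hk ht hp h
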